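/- Suppose the zero-current condition (1/c²)∂F₀b/∂t − ∂F₁b/∂x = 0 holds on all of ℝ² for every b ∈ {0,1,2,3}. Then either all of the field strengths F₀₁, F₀₂, F₀₃, F₁₂, F₁₃ vanish identically on ℝ², or α₀² = c²α₁²; that is, every zero-current electromagnetic plane wave with nonvanishing field travels at the speed of light c. -/

import Mathlib

/-- Plane-wave gauge potential `A_a(t,x) = E_a sin(α₀t + α₁x + β_a)`. -/
noncomputable def gaugePot (α₀ α₁ : ℝ) (E β : Fin 4 → ℝ) (a : Fin 4) (t x : ℝ) : ℝ :=
  E a * Real.sin (α₀ * t + α₁ * x + β a)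

/-- Deformed field strengths `F_{ab}` of the κ-Minkowski plane wave:
`F₀₁ = ∂A₁/∂t − (1+kA₀)∂A₀/∂x + kc²A₁∂A₁/∂x`,
`F₀ⱼ = ∂Aⱼ/∂t + kc²A₁∂Aⱼ/∂x` and `F₁ⱼ = (1+kA₀)∂Aⱼ/∂x` for `j = 2,3`,
`F₁₀ = −F₀₁`, `F₀₀ = F₁₁ = 0`, all others zero. -/
noncomputable def fieldStrength (c k α₀ α₁ : ℝ) (E β : Fin 4 → ℝ)
    (a b : Fin 4) (t x : ℝ) : ℝ :=
  let A := gaugePot α₀ α₁ E β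
  let At : Fin 4 → ℝ → ℝ → ℝ := fun a t x => deriv (fun s => A a s x) t
  let Ax : Fin 4 → ℝ → ℝ → ℝ := fun a t x => deriv (fun y => A a t y) x
  let F01 : ℝ → ℝ → ℝ := fun t x =>
    At 1 t x - (1 + k * A 0 t x) * Ax 0 t x + k * c^2 * A 1 t x * Ax 1 t x
  if a = 0 ∧ b = 1 then F01 t x
  else if a = 1 ∧ b = 0 then -(F01 t x)
  else if a = 0 ∧ (b = 2 ∨ b = 3) then At b t x + k * c^2 * A 1 t x * Ax b t x
  else if a = 1 ∧ (b = 2 ∨ b = 3) then (1 + k * A 0 t x) * Ax b t x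
  else 0

/-!
Every field strength is a function `f_ab` of the phase `φ = α₀ t + α₁ x`, so the zero-current
condition for the index `b` says that `α₀ f_0b - c² α₁ f_1b` is constant in `φ`.
For `b = 0, 1` this makes `f_01` constant; being the sum of first harmonics (antiperiodic with
antiperiod `π`) and second harmonics (antiperiodic with antiperiod `π / 2`), it then vanishes.
For `b = j ∈ {2, 3}` the first harmonic of that constant is `(α₀² - c² α₁²) E_j cos (φ + β_j)`,
while the remaining terms are `π`-periodic; so off the light cone `E_j = 0`, which kills
`F_0j` and `F_1j`.
-/

open Real Function

section PlaneWave

variable {α₀ α₁ : ℝ}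

lemma exists_phase_eq (hα : ¬(α₀ = 0 ∧ α₁ = 0)) (φ : ℝ) : ∃ t x : ℝ, α₀ * t + α₁ * x = φ := by
  by_cases h₀ : α₀ = 0
  · have h₁ : α₁ ≠ 0 := fun h₁ => hα ⟨h₀, h₁⟩
    exact ⟨0, φ / α₁, by rw [mul_zero, zero_add, mul_div_cancel₀ _ h₁]⟩
  · exact ⟨φ / α₀, 0, by rw [mul_zero, add_zero, mul_div_cancel₀ _ h₀]⟩

lemma deriv_comp_phase_time {f : ℝ → ℝ} (hf : Differentiable ℝ f) (α₀ α₁ t x : ℝ) :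
    deriv (fun s => f (α₀ * s + α₁ * x)) t = α₀ * deriv f (α₀ * t + α₁ * x) := by
  have hφ : HasDerivAt (fun s => α₀ * s + α₁ * x) α₀ t := by
    simpa using ((hasDerivAt_id t).const_mul α₀).add_const (α₁ * x)
  exact ((hf _).hasDerivAt.comp t hφ).deriv.trans (mul_comm _ _)

lemma deriv_comp_phase_space {f : ℝ → ℝ} (hf : Differentiable ℝ f) (α₀ α₁ t x : ℝ) :
    deriv (fun y => f (α₀ * t + α₁ * y)) x = α₁ * deriv f (α₀ * t + α₁ * x) := by
  have hφ : HasDerivAt (fun y => α₀ * t + α₁ * y) α₁ x := by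
    simpa using ((hasDerivAt_id x).const_mul α₁).const_add (α₀ * t)
  exact ((hf _).hasDerivAt.comp x hφ).deriv.trans (mul_comm _ _)

theorem planeWave_zero_current_combination_eq {c : ℝ} (hc : c ≠ 0) (hα : ¬(α₀ = 0 ∧ α₁ = 0))
    {f g : ℝ → ℝ} (hf : Differentiable ℝ f) (hg : Differentiable ℝ g)
    (hJ : ∀ t x : ℝ, (1 / c ^ 2) * deriv (fun s => f (α₀ * s + α₁ * x)) t
      - deriv (fun y => g (α₀ * t + α₁ * y)) x = 0) (φ ψ : ℝ) :
    α₀ * f φ - c ^ 2 * α₁ * g φ = α₀ * f ψ - c ^ 2 * α₁ * g ψ := by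
  refine is_const_of_deriv_eq_zero (f := fun φ => α₀ * f φ - c ^ 2 * α₁ * g φ) (by fun_prop)
    (fun φ => ?_) φ ψ
  obtain ⟨t, x, hφ⟩ := exists_phase_eq hα φ
  have h := hJ t x
  rw [deriv_comp_phase_time hf, deriv_comp_phase_space hg, hφ] at h
  have hd := ((hf φ).hasDerivAt.const_mul α₀).sub ((hg φ).hasDerivAt.const_mul (c ^ 2 * α₁))
  refine hd.deriv.trans ?_
  field_simp at h
  linear_combination h

end PlaneWave

lemma Function.Antiperiodic.eq_zero_of_add_periodic_const {α : Type*} [Add α] {g h : α → ℝ}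
    {p : α} (hg : Antiperiodic g p) (hh : Periodic h p)
    (hconst : ∀ φ ψ, g φ + h φ = g ψ + h ψ) (φ : α) : g φ = 0 := by
  have := hconst (φ + p) φ
  rw [hg φ, hh φ] at this
  linarith

section FieldProfile

noncomputable def fieldProfile (c k α₀ α₁ : ℝ) (E β : Fin 4 → ℝ) (a b : Fin 4) (φ : ℝ) : ℝ :=
  let A : Fin 4 → ℝ := fun a => E a * sin (φ + β a)
  let A' : Fin 4 → ℝ := fun a => E a * cos (φ + β a)
  let F01 := α₀ * A' 1 - (1 + k * A 0) * (α₁ * A' 0) + k * c ^ 2 * A 1 * (α₁ * A' 1)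
  if a = 0 ∧ b = 1 then F01
  else if a = 1 ∧ b = 0 then -F01
  else if a = 0 ∧ (b = 2 ∨ b = 3) then α₀ * A' b + k * c ^ 2 * A 1 * (α₁ * A' b)
  else if a = 1 ∧ (b = 2 ∨ b = 3) then (1 + k * A 0) * (α₁ * A' b)
  else 0

variable (c k α₀ α₁ : ℝ) (E β : Fin 4 → ℝ)

lemma hasDerivAt_mul_sin_add (e b φ : ℝ) :
    HasDerivAt (fun φ => e * sin (φ + b)) (e * cos (φ + b)) φ := by
  simpa using ((hasDerivAt_id φ).add_const b).sin.const_mul e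

lemma deriv_gaugePot_time (a : Fin 4) (t x : ℝ) :
    deriv (fun s => gaugePot α₀ α₁ E β a s x) t = α₀ * (E a * cos (α₀ * t + α₁ * x + β a)) := by
  rw [← (hasDerivAt_mul_sin_add (E a) (β a) _).deriv]
  exact deriv_comp_phase_time (fun φ => (hasDerivAt_mul_sin_add _ _ φ).differentiableAt) α₀ α₁ t x

lemma deriv_gaugePot_space (a : Fin 4) (t x : ℝ) :
    deriv (fun y => gaugePot α₀ α₁ E β a t y) x = α₁ * (E a * cos (α₀ * t + α₁ * x + β a)) := by
  rw [← (hasDerivAt_mul_sin_add (E a) (β a) _).deriv]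
  exact deriv_comp_phase_space (fun φ => (hasDerivAt_mul_sin_add _ _ φ).differentiableAt) α₀ α₁ t x

lemma fieldStrength_eq_fieldProfile (a b : Fin 4) (t x : ℝ) :
    fieldStrength c k α₀ α₁ E β a b t x = fieldProfile c k α₀ α₁ E β a b (α₀ * t + α₁ * x) := by
  simp only [fieldStrength, deriv_gaugePot_time, deriv_gaugePot_space]
  rfl

lemma differentiable_fieldProfile (a b : Fin 4) :
    Differentiable ℝ (fieldProfile c k α₀ α₁ E β a b) := by
  unfold fieldProfile
  split_ifs <;> fun_prop

lemma fieldProfile_zero_zero (φ : ℝ) : fieldProfile c k α₀ α₁ E β 0 0 φ = 0 := by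
  simp [fieldProfile]

lemma fieldProfile_one_one (φ : ℝ) : fieldProfile c k α₀ α₁ E β 1 1 φ = 0 := by
  simp [fieldProfile]

lemma fieldProfile_one_zero (φ : ℝ) :
    fieldProfile c k α₀ α₁ E β 1 0 φ = -fieldProfile c k α₀ α₁ E β 0 1 φ := by
  simp [fieldProfile]

lemma fieldProfile_transverse_eq_zero {j : Fin 4} (hj : j = 2 ∨ j = 3) (hE : E j = 0) (φ : ℝ) :
    fieldProfile c k α₀ α₁ E β 0 j φ = 0 ∧ fieldProfile c k α₀ α₁ E β 1 j φ = 0 := by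
  rcases hj with rfl | rfl <;> simp [fieldProfile, hE]

variable {c k α₀ α₁ E β}

lemma fieldProfile_zero_one_const (hc : c ≠ 0) (hα : ¬(α₀ = 0 ∧ α₁ = 0))
    (h₀ : ∀ φ ψ,
      α₀ * fieldProfile c k α₀ α₁ E β 0 0 φ - c ^ 2 * α₁ * fieldProfile c k α₀ α₁ E β 1 0 φ
        = α₀ * fieldProfile c k α₀ α₁ E β 0 0 ψ - c ^ 2 * α₁ * fieldProfile c k α₀ α₁ E β 1 0 ψ)
    (h₁ : ∀ φ ψ,
      α₀ * fieldProfile c k α₀ α₁ E β 0 1 φ - c ^ 2 * α₁ * fieldProfile c k α₀ α₁ E β 1 1 φ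
        = α₀ * fieldProfile c k α₀ α₁ E β 0 1 ψ - c ^ 2 * α₁ * fieldProfile c k α₀ α₁ E β 1 1 ψ)
    (φ ψ : ℝ) : fieldProfile c k α₀ α₁ E β 0 1 φ = fieldProfile c k α₀ α₁ E β 0 1 ψ := by
  have h₀ := h₀ φ ψ
  have h₁ := h₁ φ ψ
  simp only [fieldProfile_zero_zero, fieldProfile_one_one, fieldProfile_one_zero] at h₀ h₁
  by_cases hα₀ : α₀ = 0
  · have hα₁ : c ^ 2 * α₁ ≠ 0 := mul_ne_zero (pow_ne_zero 2 hc) fun hα₁ => hα ⟨hα₀, hα₁⟩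
    exact mul_left_cancel₀ hα₁ (by linear_combination h₀)
  · exact mul_left_cancel₀ hα₀ (by linear_combination h₁)

lemma fieldProfile_zero_one_eq_zero
    (hconst : ∀ φ ψ, fieldProfile c k α₀ α₁ E β 0 1 φ = fieldProfile c k α₀ α₁ E β 0 1 ψ)
    (φ : ℝ) : fieldProfile c k α₀ α₁ E β 0 1 φ = 0 := by
  set g : ℝ → ℝ := fun φ => α₀ * (E 1 * cos (φ + β 1)) - α₁ * (E 0 * cos (φ + β 0))
  set h : ℝ → ℝ := fun φ => k * α₁ *
    (c ^ 2 * E 1 ^ 2 * (sin (φ + β 1) * cos (φ + β 1)) - E 0 ^ 2 * (sin (φ + β 0) * cos (φ + β 0)))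
  have hsplit : ∀ φ, fieldProfile c k α₀ α₁ E β 0 1 φ = g φ + h φ := by
    intro φ
    simp [fieldProfile, g, h]
    ring
  have hg : Antiperiodic g π := fun φ => by
    simp only [g, add_right_comm φ π, cos_add_pi]
    ring
  have hh : Antiperiodic h (π / 2) := fun φ => by
    simp only [h, add_right_comm φ (π / 2), sin_add_pi_div_two, cos_add_pi_div_two]
    ring
  have hg₀ : ∀ φ, g φ = 0 := by
    have hh' : Periodic h π := by
      simpa only [mul_div_cancel₀ π two_ne_zero] using hh.periodic_two_mul
    refine hg.eq_zero_of_add_periodic_const hh' fun φ ψ => ?_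
    rw [← hsplit, ← hsplit]
    exact hconst φ ψ
  have hh₀ : ∀ φ, h φ = 0 := by
    refine hh.eq_zero_of_add_periodic_const (h := fun _ => 0) (fun _ => rfl) fun φ ψ => ?_
    simpa [hsplit, hg₀] using hconst φ ψ
  rw [hsplit, hg₀, hh₀, add_zero]

lemma amplitude_eq_zero_of_transverse_const {j : Fin 4} (hj : j = 2 ∨ j = 3)
    (hlight : α₀ ^ 2 ≠ c ^ 2 * α₁ ^ 2)
    (hconst : ∀ φ ψ,
      α₀ * fieldProfile c k α₀ α₁ E β 0 j φ - c ^ 2 * α₁ * fieldProfile c k α₀ α₁ E β 1 j φ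
        = α₀ * fieldProfile c k α₀ α₁ E β 0 j ψ - c ^ 2 * α₁ * fieldProfile c k α₀ α₁ E β 1 j ψ) :
    E j = 0 := by
  set g : ℝ → ℝ := fun φ => (α₀ ^ 2 - c ^ 2 * α₁ ^ 2) * E j * cos (φ + β j)
  set h : ℝ → ℝ := fun φ => k * c ^ 2 * α₁ * E j *
    ((α₀ * E 1 * sin (φ + β 1) - α₁ * E 0 * sin (φ + β 0)) * cos (φ + β j))
  have hsplit : ∀ φ, α₀ * fieldProfile c k α₀ α₁ E β 0 j φ
      - c ^ 2 * α₁ * fieldProfile c k α₀ α₁ E β 1 j φ = g φ + h φ := by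
    intro φ
    rcases hj with rfl | rfl <;> simp [fieldProfile, g, h] <;> ring
  have hg : Antiperiodic g π := fun φ => by
    simp only [g, add_right_comm φ π, cos_add_pi]
    ring
  have hh : Periodic h π := fun φ => by
    simp only [h, add_right_comm φ π, sin_add_pi, cos_add_pi]
    ring
  have hg₀ := hg.eq_zero_of_add_periodic_const hh (fun φ ψ => by
    rw [← hsplit, ← hsplit]
    exact hconst φ ψ) (-β j)
  simpa [g, sub_eq_zero, hlight] using hg₀

end FieldProfile

theorem zero_current_plane_waves_travel_at_speed_of_light_general
    (c k α₀ α₁ : ℝ) (hc : 0 < c) (hα : ¬(α₀ = 0 ∧ α₁ = 0))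
    (E β : Fin 4 → ℝ)
    (hJ : ∀ b : Fin 4, ∀ t x : ℝ,
      (1 / c^2) * deriv (fun s => fieldStrength c k α₀ α₁ E β 0 b s x) t
        - deriv (fun y => fieldStrength c k α₀ α₁ E β 1 b t y) x = 0) :
    (∀ t x : ℝ,
        fieldStrength c k α₀ α₁ E β 0 1 t x = 0 ∧
        fieldStrength c k α₀ α₁ E β 0 2 t x = 0 ∧
        fieldStrength c k α₀ α₁ E β 0 3 t x = 0 ∧
        fieldStrength c k α₀ α₁ E β 1 2 t x = 0 ∧
        fieldStrength c k α₀ α₁ E β 1 3 t x = 0) ∨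
      α₀^2 = c^2 * α₁^2 := by
  by_cases hlight : α₀ ^ 2 = c ^ 2 * α₁ ^ 2
  · exact Or.inr hlight
  left
  have hconst b := planeWave_zero_current_combination_eq hc.ne' hα
    (differentiable_fieldProfile c k α₀ α₁ E β 0 b) (differentiable_fieldProfile c k α₀ α₁ E β 1 b)
    (by simpa only [fieldStrength_eq_fieldProfile] using hJ b)
  have hF₀₁ := fieldProfile_zero_one_eq_zero
    (fieldProfile_zero_one_const hc.ne' hα (hconst 0) (hconst 1))
  have hE₂ := amplitude_eq_zero_of_transverse_const (Or.inl rfl) hlight (hconst 2)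
  have hE₃ := amplitude_eq_zero_of_transverse_const (Or.inr rfl) hlight (hconst 3)
  have hF₂ := fieldProfile_transverse_eq_zero c k α₀ α₁ E β (Or.inl rfl) hE₂
  have hF₃ := fieldProfile_transverse_eq_zero c k α₀ α₁ E β (Or.inr rfl) hE₃
  intro t x
  simp only [fieldStrength_eq_fieldProfile]
  exact ⟨hF₀₁ _, (hF₂ _).1, (hF₃ _).1, (hF₂ _).2, (hF₃ _).2⟩

theorem zero_current_plane_waves_travel_at_speed_of_light
    (c k α₀ α₁ : ℝ) (hc : 0 < c) (hα : ¬(α₀ = 0 ∧ α₁ = 0))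
    (E β : Fin 4 → ℝ) (hβ₀ : β 0 = 0)
    (hJ : ∀ b : Fin 4, ∀ t x : ℝ,
      (1 / c^2) * deriv (fun s => fieldStrength c k α₀ α₁ E β 0 b s x) t
        - deriv (fun y => fieldStrength c k α₀ α₁ E β 1 b t y) x = 0) :
    (∀ t x : ℝ,
        fieldStrength c k α₀ α₁ E β 0 1 t x = 0 ∧
        fieldStrength c k α₀ α₁ E β 0 2 t x = 0 ∧
        fieldStrength c k α₀ α₁ E β 0 3 t x = 0 ∧
        fieldStrength c k α₀ α₁ E β 1 2 t x = 0 ∧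
        fieldStrength c k α₀ α₁ E β 1 3 t x = 0) ∨
      α₀^2 = c^2 * α₁^2 :=
  zero_current_plane_waves_travel_at_speed_of_light_general c k α₀ α₁ hc hα E β hJ
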